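/- arXiv:1603.09586 — 3 statements merged into one kernel-verified Lean document; each statement's English description precedes it below -/
import Mathlib

section
/- Let K_n be the complete graph on n ≥ 2 vertices and c : E(K_n) → [-1,1] any edge weight such that the PSD matrix completion problem P(K_n, c) is feasible. Then there exists a single positive semidefinite matrix Ω with Σᵢ Ω[i,i] + Σ_{i<j} 2Ω[i,j]c(ij) = 0 and rank(Ω) = n − r, where r is the maximum rank of a feasible solution. In other words, the singularity degree of K_n is at most one. -/
open Matrix

theorem complete_graph_singularity_degree_le_one {n : ℕ} (hn : 2 ≤ n)
    (c : Fin n → Fin n → ℝ) (hc : ∀ i j, c i j = c j i) (r : ℕ)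
    (hfeas : ∃ X : Matrix (Fin n) (Fin n) ℝ, X.PosSemidef ∧ (∀ i, X i i = 1) ∧
      (∀ i j, i ≠ j → X i j = c i j) ∧ X.rank = r)
    (hmax : ∀ X : Matrix (Fin n) (Fin n) ℝ, X.PosSemidef → (∀ i, X i i = 1) →
      (∀ i j, i ≠ j → X i j = c i j) → X.rank ≤ r) :
    ∃ Ω : Matrix (Fin n) (Fin n) ℝ, Ω.PosSemidef ∧
      (∑ i, Ω i i) + (∑ i, ∑ j, if i ≠ j then Ω i j * c i j else 0) = 0 ∧
      Ω.rank = n - r := by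
  obtain ⟨X, hXpsd, hXdiag, hXoff, hXrank⟩ := hfeas
  have hH : X.IsHermitian := hXpsd.1
  set U : Matrix (Fin n) (Fin n) ℝ := (hH.eigenvectorUnitary : Matrix (Fin n) (Fin n) ℝ) with hU
  set d : Fin n → ℝ := fun i => if hH.eigenvalues i = 0 then 1 else 0 with hd
  set Ω : Matrix (Fin n) (Fin n) ℝ := U * diagonal d * Uᴴ with hΩ
  have hUstar : Uᴴ * U = 1 := by
    rw [← Matrix.star_eq_conjTranspose]
    exact Unitary.coe_star_mul_self hH.eigenvectorUnitary
  have hUU : U * Uᴴ = 1 := by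
    rw [← Matrix.star_eq_conjTranspose]
    exact Unitary.coe_mul_star_self hH.eigenvectorUnitary
  have hdd : diagonal d * diagonal hH.eigenvalues = 0 := by
    rw [diagonal_mul_diagonal]
    ext i j
    rcases eq_or_ne i j with rfl | hij
    · by_cases h : hH.eigenvalues i = 0 <;> simp [hd, h]
    · simp [diagonal_apply_ne _ hij]
  have hΩX : Ω * X = 0 := by
    have hspec := hH.spectral_theorem
    have hspec' : X = U * diagonal hH.eigenvalues * Uᴴ := by
      simpa [hU, Matrix.star_eq_conjTranspose] using hspec
    rw [hΩ, hspec']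
    calc U * diagonal d * Uᴴ * (U * diagonal hH.eigenvalues * Uᴴ)
        = U * (diagonal d * ((Uᴴ * U) * (diagonal hH.eigenvalues * Uᴴ))) := by
          simp only [Matrix.mul_assoc]
      _ = U * (diagonal d * diagonal hH.eigenvalues) * Uᴴ := by
          rw [hUstar, Matrix.one_mul, Matrix.mul_assoc, Matrix.mul_assoc]
      _ = 0 := by rw [hdd]; simp
  refine ⟨Ω, ?_, ?_, ?_⟩
  · exact (Matrix.PosSemidef.mul_mul_conjTranspose_same (by
      refine Matrix.posSemidef_diagonal_iff.mpr ?_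
      intro i; by_cases h : hH.eigenvalues i = 0 <;> simp [hd, h]) U)
  · have key : ∀ i j, Ω i j * X j i =
        (if i = j then Ω i i else 0) + (if i ≠ j then Ω i j * c i j else 0) := by
      intro i j
      rcases eq_or_ne i j with rfl | h
      · simp [hXdiag]
      · rw [hXoff j i (Ne.symm h), hc j i]
        simp [h]
    have h0 : ∑ i, ∑ j, Ω i j * X j i = 0 := by
      have : ∀ i, (Ω * X) i i = 0 := fun i => by rw [hΩX]; rfl
      calc ∑ i, ∑ j, Ω i j * X j i = ∑ i, (Ω * X) i i := by
            simp [Matrix.mul_apply]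
        _ = 0 := by simp [this]
    calc (∑ i, Ω i i) + (∑ i, ∑ j, if i ≠ j then Ω i j * c i j else 0)
        = ∑ i, ∑ j, Ω i j * X j i := by
          simp only [key, Finset.sum_add_distrib, Finset.sum_ite_eq, Finset.mem_univ, if_true]
      _ = 0 := h0
  · have hdetU : IsUnit U.det := by
      apply IsUnit.of_mul_eq_one Uᴴ.det
      rw [← Matrix.det_mul, hUU, Matrix.det_one]
    have hdetUH : IsUnit Uᴴ.det := by
      apply IsUnit.of_mul_eq_one U.det
      rw [← Matrix.det_mul, hUstar, Matrix.det_one]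
    have h1 : Ω.rank = (diagonal d).rank := by
      rw [hΩ, Matrix.rank_mul_eq_left_of_isUnit_det _ _ hdetUH,
        Matrix.rank_mul_eq_right_of_isUnit_det _ _ hdetU]
    have h2 : (diagonal d).rank = Fintype.card {i // hH.eigenvalues i = 0} := by
      rw [Matrix.rank_diagonal]
      apply Fintype.card_congr
      apply Equiv.subtypeEquivRight
      intro i
      by_cases h : hH.eigenvalues i = 0 <;> simp [hd, h]
    have h3 : Fintype.card {i // hH.eigenvalues i = 0} =
        n - Fintype.card {i // hH.eigenvalues i ≠ 0} := by
      have := Fintype.card_subtype_compl (fun i => hH.eigenvalues i ≠ 0)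
      simp only [not_not] at this
      simpa using this
    rw [h1, h2, h3, ← hH.rank_eq_card_non_zero_eigs, hXrank]
end

section
/- Let G be a graph and H an induced subgraph of G. Then sd(G) ≥ sd(H). -/
open Matrix

/-- `X` is a feasible solution of the PSD matrix completion problem `P(G, c)`. -/
def Feasible {n : ℕ} (G : SimpleGraph (Fin n)) (c : Fin n → Fin n → ℝ)
    (X : Matrix (Fin n) (Fin n) ℝ) : Prop :=
  X.PosSemidef ∧ (∀ i, X i i = 1) ∧ ∀ i j, G.Adj i j → X i j = c i j

/-- The maximum rank of a feasible solution of `P(G, c)`. -/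
noncomputable def maxRank {n : ℕ} (G : SimpleGraph (Fin n)) (c : Fin n → Fin n → ℝ) : ℕ :=
  sSup {r | ∃ X, Feasible G c X ∧ X.rank = r}

/-- `Ω` is a facial reduction sequence for `P(G, c)`: symmetric stress matrices supported
on the diagonal and the edges of `G`, nested PSD, orthogonal (in the trace inner product)
to every feasible solution, and whose final zero set spans a subspace of dimension equal to
the maximum rank of a feasible solution (so the sequence has rank `n - maxRank G c`). -/
def IsFacialSeq {n : ℕ} (G : SimpleGraph (Fin n)) (c : Fin n → Fin n → ℝ)
    {k : ℕ} (Ω : Fin k → Matrix (Fin n) (Fin n) ℝ) : Prop :=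
  (∀ m, (Ω m).IsSymm) ∧
  (∀ m i j, i ≠ j → ¬ G.Adj i j → Ω m i j = 0) ∧
  (∀ m : Fin k, ∀ x : Fin n → ℝ,
    (∀ m' : Fin k, m' < m → x ⬝ᵥ (Ω m').mulVec x = 0) → 0 ≤ x ⬝ᵥ (Ω m).mulVec x) ∧
  (∀ X, Feasible G c X → ∀ m, (Ω m * X).trace = 0) ∧
  Module.finrank ℝ (Submodule.span ℝ {x : Fin n → ℝ | ∀ m, x ⬝ᵥ (Ω m).mulVec x = 0})
    = maxRank G c

/-- The singularity degree of `P(G, c)`: the least length of a facial reduction sequence. -/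
noncomputable def sd {n : ℕ} (G : SimpleGraph (Fin n)) (c : Fin n → Fin n → ℝ) : ℕ∞ :=
  sInf {s : ℕ∞ | ∃ (k : ℕ) (Ω : Fin k → Matrix (Fin n) (Fin n) ℝ),
    IsFacialSeq G c Ω ∧ s = k}

/-- The singularity degree of a graph `G`: the largest singularity degree of `P(G, c)`
over all feasible edge weights `c`. -/
noncomputable def sdGraph {n : ℕ} (G : SimpleGraph (Fin n)) : ℕ∞ :=
  sSup {s : ℕ∞ | ∃ c : Fin n → Fin n → ℝ, (∃ X, Feasible G c X) ∧ s = sd G c}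

section Helpers
variable {n m k : ℕ}

lemma dot_symm (M : Matrix (Fin n) (Fin n) ℝ) (hM : M.IsSymm) (x y : Fin n → ℝ) :
    x ⬝ᵥ M *ᵥ y = y ⬝ᵥ M *ᵥ x := by
  rw [dotProduct_mulVec, ← mulVec_transpose, hM.eq, dotProduct_comm]

lemma quad_expand (M : Matrix (Fin n) (Fin n) ℝ) (hM : M.IsSymm) (x y : Fin n → ℝ)
    (t : ℝ) : (x + t • y) ⬝ᵥ M *ᵥ (x + t • y)
      = x ⬝ᵥ M *ᵥ x + 2 * t * (x ⬝ᵥ M *ᵥ y) + t ^ 2 * (y ⬝ᵥ M *ᵥ y) := by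
  have h := dot_symm M hM y x
  simp only [mulVec_add, mulVec_smul, dotProduct_add, add_dotProduct, dotProduct_smul,
    smul_dotProduct, smul_eq_mul]
  rw [h]; ring

lemma bilin_zero (Ω : Fin k → Matrix (Fin n) (Fin n) ℝ)
    (hsym : ∀ j, (Ω j).IsSymm)
    (h3 : ∀ j : Fin k, ∀ x : Fin n → ℝ,
      (∀ i : Fin k, i < j → x ⬝ᵥ (Ω i) *ᵥ x = 0) → 0 ≤ x ⬝ᵥ (Ω j) *ᵥ x)
    (j : Fin k) (x y : Fin n → ℝ)
    (hx : ∀ i, i ≤ j → x ⬝ᵥ (Ω i) *ᵥ x = 0) (hy : ∀ i, i ≤ j → y ⬝ᵥ (Ω i) *ᵥ y = 0) :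
    x ⬝ᵥ (Ω j) *ᵥ y = 0 := by
  have H : ∀ N : ℕ, ∀ j : Fin k, (j : ℕ) < N → ∀ x y : Fin n → ℝ,
      (∀ i, i ≤ j → x ⬝ᵥ (Ω i) *ᵥ x = 0) → (∀ i, i ≤ j → y ⬝ᵥ (Ω i) *ᵥ y = 0) →
      x ⬝ᵥ (Ω j) *ᵥ y = 0 := by
    intro N
    induction N with
    | zero => omega
    | succ N ih =>
      intro j hj x y hx hy
      have hcross : ∀ i : Fin k, i < j → x ⬝ᵥ (Ω i) *ᵥ y = 0 := by
        intro i hij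
        exact ih i (by omega) x y (fun i' h => hx i' (le_trans h hij.le))
          (fun i' h => hy i' (le_trans h hij.le))
      have key : ∀ t : ℝ, 0 ≤ 2 * t * (x ⬝ᵥ (Ω j) *ᵥ y) := by
        intro t
        have h0 := h3 j (x + t • y) (fun i hi => by
          rw [quad_expand _ (hsym i), hx i hi.le, hy i hi.le, hcross i hi]; ring)
        rwa [quad_expand _ (hsym j), hx j le_rfl, hy j le_rfl, zero_add, mul_zero,
          add_zero] at h0
      linarith [key 1, key (-1)]
  exact H k j j.isLt x y hx hy

lemma gram_trace (M B : Matrix (Fin n) (Fin n) ℝ) :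
    (M * (Bᵀ * B)).trace = ∑ p, (B p) ⬝ᵥ M *ᵥ (B p) := by
  rw [← mul_assoc, Matrix.trace_mul_comm]
  simp [Matrix.trace, Matrix.diag, Matrix.mul_apply, Matrix.mulVec, dotProduct,
    Matrix.transpose_apply]

lemma gram_rows (Ω : Fin k → Matrix (Fin n) (Fin n) ℝ)
    (h3 : ∀ j : Fin k, ∀ x : Fin n → ℝ,
      (∀ i : Fin k, i < j → x ⬝ᵥ (Ω i) *ᵥ x = 0) → 0 ≤ x ⬝ᵥ (Ω j) *ᵥ x)
    (B : Matrix (Fin n) (Fin n) ℝ)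
    (htr : ∀ j, ((Ω j) * (Bᵀ * B)).trace = 0) :
    ∀ (j : Fin k) (p : Fin n), (B p) ⬝ᵥ (Ω j) *ᵥ (B p) = 0 := by
  have H : ∀ N : ℕ, ∀ j : Fin k, (j : ℕ) < N → ∀ p, (B p) ⬝ᵥ (Ω j) *ᵥ (B p) = 0 := by
    intro N
    induction N with
    | zero => omega
    | succ N ih =>
      intro j hj p
      have hnn : ∀ p', 0 ≤ (B p') ⬝ᵥ (Ω j) *ᵥ (B p') := fun p' =>
        h3 j (B p') (fun i hi => ih i (by omega) p')
      have hsum : ∑ p', (B p') ⬝ᵥ (Ω j) *ᵥ (B p') = 0 := by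
        rw [← gram_trace]; exact htr j
      exact (Finset.sum_eq_zero_iff_of_nonneg (fun p' _ => hnn p')).mp hsum p
        (Finset.mem_univ p)
  exact fun j p => H k j j.isLt p

lemma sandwich (M B : Matrix (Fin n) (Fin n) ℝ)
    (h : ∀ p q, (B p) ⬝ᵥ M *ᵥ (B q) = 0) : (Bᵀ * B) * M * (Bᵀ * B) = 0 := by
  have hB : B * M * Bᵀ = 0 := by
    ext p q
    have h2 := h p q
    simp only [Matrix.mul_apply, Matrix.mulVec, dotProduct, Matrix.transpose_apply,
      Finset.mul_sum, Matrix.zero_apply] at h2 ⊢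
    rw [← h2, Finset.sum_comm]
    exact Finset.sum_congr rfl fun s _ => by rw [Finset.sum_mul]; exact Finset.sum_congr rfl fun t _ => by ring
  have e : (Bᵀ * B) * M * (Bᵀ * B) = Bᵀ * (B * M * Bᵀ) * B := by
    simp only [Matrix.mul_assoc]
  rw [e, hB, Matrix.mul_zero, Matrix.zero_mul]

lemma sum_range (f : Fin m ↪ Fin n) (F : Fin n → ℝ)
    (h0 : ∀ p, (∀ i, f i ≠ p) → F p = 0) : ∑ p, F p = ∑ i, F (f i) := by
  classical
  have himg : ∑ p ∈ Finset.univ.image f, F p = ∑ i, F (f i) :=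
    Finset.sum_image (fun a _ b _ h => f.injective h)
  rw [← himg]
  refine (Finset.sum_subset (Finset.subset_univ _) ?_).symm
  intro p _ hp
  refine h0 p fun i hi => hp ?_
  exact Finset.mem_image.mpr ⟨i, Finset.mem_univ i, hi⟩

lemma sum_range_emb (f : Fin m ↪ Fin n) (F : Fin n → ℝ)
    (h0 : ∀ p, (∀ i, f i ≠ p) → F p = 0) : ∑ p, F p = ∑ i, F (f i) := by
  classical
  have himg : ∑ p ∈ Finset.univ.image f, F p = ∑ i, F (f i) :=
    Finset.sum_image (fun a _ b _ h => f.injective h)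
  rw [← himg]
  refine (Finset.sum_subset (Finset.subset_univ _) ?_).symm
  intro p _ hp
  refine h0 p fun i hi => hp ?_
  exact Finset.mem_image.mpr ⟨i, Finset.mem_univ i, hi⟩

noncomputable def extV (f : Fin m ↪ Fin n) : (Fin m → ℝ) →ₗ[ℝ] (Fin n → ℝ) where
  toFun x := fun p => if hp : ∃ i, f i = p then x hp.choose else 0
  map_add' x y := by
    funext p
    by_cases hp : ∃ i, f i = p
    · simp [dif_pos hp]
    · simp [dif_neg hp]
  map_smul' a x := by
    funext p
    by_cases hp : ∃ i, f i = p
    · simp [dif_pos hp]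
    · simp [dif_neg hp]

lemma extV_apply_f (f : Fin m ↪ Fin n) (x : Fin m → ℝ) (i : Fin m) :
    extV f x (f i) = x i := by
  have hp : ∃ i', f i' = f i := ⟨i, rfl⟩
  show (if hp : ∃ i', f i' = f i then x hp.choose else 0) = x i
  rw [dif_pos hp]
  congr 1
  exact f.injective hp.choose_spec

lemma extV_apply_not (f : Fin m ↪ Fin n) (x : Fin m → ℝ) (p : Fin n)
    (hp : ∀ i, f i ≠ p) : extV f x p = 0 := by
  show (if h : ∃ i, f i = p then x h.choose else 0) = 0
  rw [dif_neg (by push_neg; exact hp)]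

lemma ext_dot (f : Fin m ↪ Fin n) (M : Matrix (Fin n) (Fin n) ℝ) (x y : Fin m → ℝ) :
    (extV f x) ⬝ᵥ M *ᵥ (extV f y) = x ⬝ᵥ (M.submatrix f f) *ᵥ y := by
  simp only [dotProduct, Matrix.mulVec, Matrix.submatrix_apply]
  rw [sum_range_emb f _ (fun p hp => by rw [extV_apply_not f x p hp, zero_mul])]
  refine Finset.sum_congr rfl fun i _ => ?_
  rw [extV_apply_f,
    sum_range_emb f _ (fun q hq => by rw [extV_apply_not f y q hq, mul_zero])]
  exact congrArg _ (Finset.sum_congr rfl fun j _ => by rw [extV_apply_f])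

noncomputable def Yhat (f : Fin m ↪ Fin n) (X : Matrix (Fin m) (Fin m) ℝ) :
    Matrix (Fin n) (Fin n) ℝ :=
  fun p q => if hp : ∃ i, f i = p then (if hq : ∃ j, f j = q then X hp.choose hq.choose else 0)
    else (if p = q then 1 else 0)

lemma Yhat_ff (f : Fin m ↪ Fin n) (X : Matrix (Fin m) (Fin m) ℝ) (i j : Fin m) :
    Yhat f X (f i) (f j) = X i j := by
  have hp : ∃ i', f i' = f i := ⟨i, rfl⟩
  have hq : ∃ j', f j' = f j := ⟨j, rfl⟩
  show (if hp : ∃ i', f i' = f i then _ else _) = X i j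
  rw [dif_pos hp, dif_pos hq]
  congr 1
  · exact f.injective hp.choose_spec
  · exact f.injective hq.choose_spec

lemma Yhat_row_not (f : Fin m ↪ Fin n) (X : Matrix (Fin m) (Fin m) ℝ) (p q : Fin n)
    (hp : ∀ i, f i ≠ p) : Yhat f X p q = if p = q then 1 else 0 := by
  show (if h : ∃ i, f i = p then _ else _) = _
  rw [dif_neg (by push_neg; exact hp)]

lemma Yhat_mixed (f : Fin m ↪ Fin n) (X : Matrix (Fin m) (Fin m) ℝ) (i : Fin m) (q : Fin n)
    (hq : ∀ j, f j ≠ q) : Yhat f X (f i) q = 0 := by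
  have hp : ∃ i', f i' = f i := ⟨i, rfl⟩
  show (if h : ∃ i', f i' = f i then _ else _) = _
  rw [dif_pos hp, dif_neg (by push_neg; exact hq)]

lemma Yhat_symm (f : Fin m ↪ Fin n) (X : Matrix (Fin m) (Fin m) ℝ) (hX : X.IsHermitian) :
    (Yhat f X).IsHermitian := by
  have hXs : ∀ i j, X j i = X i j := fun i j => by
    have := congrFun (congrFun hX i) j
    simpa using this
  apply Matrix.ext
  intro p q
  rw [Matrix.conjTranspose_apply, star_trivial]
  by_cases hp : ∃ i, f i = p
  · obtain ⟨i, rfl⟩ := hp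
    by_cases hq : ∃ j, f j = q
    · obtain ⟨j, rfl⟩ := hq
      rw [Yhat_ff, Yhat_ff]; exact hXs i j
    · push_neg at hq
      rw [Yhat_mixed f X i q hq, Yhat_row_not f X q (f i) hq,
        if_neg (fun h => hq i h.symm)]
  · push_neg at hp
    by_cases hq : ∃ j, f j = q
    · obtain ⟨j, rfl⟩ := hq
      rw [Yhat_mixed f X j p hp, Yhat_row_not f X p (f j) hp,
        if_neg (fun h => hp j h.symm)]
    · push_neg at hq
      rw [Yhat_row_not f X p q hp, Yhat_row_not f X q p hq]
      simp [eq_comm]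

lemma Yhat_mulVec_f (f : Fin m ↪ Fin n) (X : Matrix (Fin m) (Fin m) ℝ) (v : Fin n → ℝ)
    (i : Fin m) : ((Yhat f X) *ᵥ v) (f i) = (X *ᵥ (fun j => v (f j))) i := by
  show ∑ q, Yhat f X (f i) q * v q = ∑ j, X i j * v (f j)
  rw [sum_range_emb f _ (fun q hq => by rw [Yhat_mixed f X i q hq, zero_mul])]
  exact Finset.sum_congr rfl fun j _ => by rw [Yhat_ff]

lemma Yhat_mulVec_not (f : Fin m ↪ Fin n) (X : Matrix (Fin m) (Fin m) ℝ) (v : Fin n → ℝ)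
    (p : Fin n) (hp : ∀ i, f i ≠ p) : ((Yhat f X) *ᵥ v) p = v p := by
  show ∑ q, Yhat f X p q * v q = v p
  have : ∀ q, Yhat f X p q * v q = if p = q then v q else 0 := fun q => by
    rw [Yhat_row_not f X p q hp]; split <;> simp
  simp_rw [this]
  simp

lemma delta_row_mul {N : ℕ} (Y M : Matrix (Fin N) (Fin N) ℝ) (p : Fin N)
    (hrow : ∀ s, Y p s = if p = s then 1 else 0) (q : Fin N) : (Y * M) p q = M p q := by
  rw [Matrix.mul_apply]
  have h : ∀ t, Y p t * M t q = if p = t then M t q else 0 := fun t => by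
    rw [hrow t]; split <;> simp
  simp_rw [h]
  simp

lemma mul_delta_col {N : ℕ} (M Y : Matrix (Fin N) (Fin N) ℝ) (q : Fin N)
    (hcol : ∀ t, Y t q = if t = q then 1 else 0) (p : Fin N) : (M * Y) p q = M p q := by
  rw [Matrix.mul_apply]
  have h : ∀ t, M p t * Y t q = if t = q then M p t else 0 := fun t => by
    rw [hcol t]; split <;> simp
  simp_rw [h]
  simp

lemma Yhat_posSemidef (f : Fin m ↪ Fin n) (X : Matrix (Fin m) (Fin m) ℝ)
    (hX : X.PosSemidef) : (Yhat f X).PosSemidef := by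
  refine Matrix.PosSemidef.of_dotProduct_mulVec_nonneg (Yhat_symm f X hX.1) fun y => ?_
  rw [star_trivial]
  set e : Fin n → ℝ := extV f (fun i => y (f i)) with he
  set w : Fin n → ℝ := y - e with hwdef
  have hw : ∀ i, w (f i) = 0 := by
    intro i
    simp [hwdef, he, extV_apply_f]
  have hy : y = e + w := by simp [hwdef]
  have hYw_f : ∀ i, ((Yhat f X) *ᵥ w) (f i) = 0 := by
    intro i
    rw [Yhat_mulVec_f]
    have : (fun j => w (f j)) = (0 : Fin m → ℝ) := funext fun j => hw j
    rw [this, Matrix.mulVec_zero]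
    rfl
  have hsymm : (Yhat f X).IsSymm := by
    have h := Yhat_symm f X hX.1
    rwa [Matrix.IsHermitian, Matrix.conjTranspose_eq_transpose_of_trivial] at h
  have hsub : (Yhat f X).submatrix f f = X := by
    apply Matrix.ext
    intro i j
    rw [Matrix.submatrix_apply, Yhat_ff]
  have heYe : e ⬝ᵥ (Yhat f X) *ᵥ e = (fun i => y (f i)) ⬝ᵥ X *ᵥ (fun i => y (f i)) := by
    rw [he, ext_dot, hsub]
  have heYw : e ⬝ᵥ (Yhat f X) *ᵥ w = 0 := by
    apply Finset.sum_eq_zero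
    intro p _
    by_cases hp : ∃ i, f i = p
    · obtain ⟨i, rfl⟩ := hp
      rw [hYw_f i, mul_zero]
    · push_neg at hp
      rw [he, extV_apply_not f _ p hp, zero_mul]
  have hwYe : w ⬝ᵥ (Yhat f X) *ᵥ e = 0 := by
    rw [dot_symm _ hsymm]; exact heYw
  have hwYw : 0 ≤ w ⬝ᵥ (Yhat f X) *ᵥ w := by
    apply Finset.sum_nonneg
    intro p _
    by_cases hp : ∃ i, f i = p
    · obtain ⟨i, rfl⟩ := hp
      rw [hw i, zero_mul]
    · push_neg at hp
      rw [Yhat_mulVec_not f X w p hp]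
      exact mul_self_nonneg _
  have hXq := hX.dotProduct_mulVec_nonneg (fun i => y (f i))
  rw [star_trivial] at hXq
  have final : y ⬝ᵥ (Yhat f X) *ᵥ y
      = (fun i => y (f i)) ⬝ᵥ X *ᵥ (fun i => y (f i)) + w ⬝ᵥ (Yhat f X) *ᵥ w := by
    have h0 : y ⬝ᵥ (Yhat f X) *ᵥ y = (e + w) ⬝ᵥ (Yhat f X) *ᵥ (e + w) := by rw [← hy]
    rw [h0]
    simp only [Matrix.mulVec_add, dotProduct_add, add_dotProduct]
    rw [heYe, heYw, hwYe]
    ring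
  rw [final]
  linarith

lemma rank_nullity_mat {N : ℕ} (A : Matrix (Fin N) (Fin N) ℝ) :
    A.rank + Module.finrank ℝ ↥(LinearMap.ker A.mulVecLin) = N := by
  have h := LinearMap.finrank_range_add_finrank_ker A.mulVecLin
  rw [Module.finrank_pi ℝ, Fintype.card_fin] at h
  exact h

lemma Yhat_ker_ext (f : Fin m ↪ Fin n) (X : Matrix (Fin m) (Fin m) ℝ) (x : Fin m → ℝ)
    (hx : X *ᵥ x = 0) : (Yhat f X) *ᵥ (extV f x) = 0 := by
  funext p
  by_cases hp : ∃ i, f i = p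
  · obtain ⟨i, rfl⟩ := hp
    rw [Yhat_mulVec_f]
    have : (fun j => extV f x (f j)) = x := funext fun j => extV_apply_f f x j
    rw [this, hx]
    rfl
  · push_neg at hp
    rw [Yhat_mulVec_not f X _ p hp, extV_apply_not f x p hp]
    rfl

lemma Yhat_ker_res (f : Fin m ↪ Fin n) (X : Matrix (Fin m) (Fin m) ℝ) (y : Fin n → ℝ)
    (hy : (Yhat f X) *ᵥ y = 0) : X *ᵥ (fun i => y (f i)) = 0 := by
  funext i
  rw [← Yhat_mulVec_f f X y i, hy]
  rfl

lemma Yhat_ker_out (f : Fin m ↪ Fin n) (X : Matrix (Fin m) (Fin m) ℝ) (y : Fin n → ℝ)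
    (hy : (Yhat f X) *ᵥ y = 0) (p : Fin n) (hp : ∀ i, f i ≠ p) : y p = 0 := by
  rw [← Yhat_mulVec_not f X y p hp, hy]
  rfl

lemma extV_injective (f : Fin m ↪ Fin n) : Function.Injective (extV f) := by
  intro a b h
  funext i
  rw [← extV_apply_f f a i, ← extV_apply_f f b i, h]

lemma finrank_ker_Yhat (f : Fin m ↪ Fin n) (X : Matrix (Fin m) (Fin m) ℝ) :
    Module.finrank ℝ ↥(LinearMap.ker (Yhat f X).mulVecLin)
      = Module.finrank ℝ ↥(LinearMap.ker X.mulVecLin) := by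
  apply le_antisymm
  · set g : ↥(LinearMap.ker (Yhat f X).mulVecLin) →ₗ[ℝ] ↥(LinearMap.ker X.mulVecLin) :=
      LinearMap.codRestrict _ ((LinearMap.funLeft ℝ ℝ f).comp
        (LinearMap.ker (Yhat f X).mulVecLin).subtype)
        (fun y => by
          rw [LinearMap.mem_ker, Matrix.mulVecLin_apply]
          exact Yhat_ker_res f X y.1 (by
            have := y.2
            rwa [LinearMap.mem_ker, Matrix.mulVecLin_apply] at this)) with hg
    apply LinearMap.finrank_le_finrank_of_injective (f := g)
    intro a b hab
    apply Subtype.ext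
    funext p
    by_cases hp : ∃ i, f i = p
    · obtain ⟨i, rfl⟩ := hp
      have := congrFun (congrArg Subtype.val hab) i
      exact this
    · push_neg at hp
      rw [Yhat_ker_out f X a.1 (by have := a.2; rwa [LinearMap.mem_ker, Matrix.mulVecLin_apply] at this) p hp,
        Yhat_ker_out f X b.1 (by have := b.2; rwa [LinearMap.mem_ker, Matrix.mulVecLin_apply] at this) p hp]
  · set g : ↥(LinearMap.ker X.mulVecLin) →ₗ[ℝ] ↥(LinearMap.ker (Yhat f X).mulVecLin) :=
      LinearMap.codRestrict _ ((extV f).comp (LinearMap.ker X.mulVecLin).subtype)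
        (fun x => by
          rw [LinearMap.mem_ker, Matrix.mulVecLin_apply]
          exact Yhat_ker_ext f X x.1 (by
            have := x.2
            rwa [LinearMap.mem_ker, Matrix.mulVecLin_apply] at this)) with hg
    apply LinearMap.finrank_le_finrank_of_injective (f := g)
    intro a b hab
    exact Subtype.ext (extV_injective f (congrArg Subtype.val hab))

end Helpers

theorem sdGraph_induced_subgraph_le {n m : ℕ} (G : SimpleGraph (Fin n))
    (H : SimpleGraph (Fin m)) (f : Fin m ↪ Fin n)
    (hf : ∀ i j, H.Adj i j ↔ G.Adj (f i) (f j)) :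
    sdGraph H ≤ sdGraph G := by
  classical
  refine sSup_le ?_
  rintro s ⟨c, ⟨X0, hX0⟩, rfl⟩
  -- a maximum-rank feasible solution of P(H,c)
  have hSbdd : BddAbove {r | ∃ X, Feasible H c X ∧ X.rank = r} := by
    refine ⟨m, ?_⟩
    rintro r ⟨X, _, rfl⟩
    exact X.rank_le_card_width.trans (by simp)
  have hSne : Set.Nonempty {r | ∃ X, Feasible H c X ∧ X.rank = r} := ⟨X0.rank, X0, hX0, rfl⟩
  obtain ⟨Xh, hXh, hXhrank⟩ := Nat.sSup_mem hSne hSbdd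
  have hXhrank' : Xh.rank = maxRank H c := hXhrank
  set Y := Yhat f Xh with hYdef
  set c' : Fin n → Fin n → ℝ := fun p q => Y p q with hc'
  have hYfeas : Feasible G c' Y := by
    refine ⟨Yhat_posSemidef f Xh hXh.1, ?_, fun p q _ => rfl⟩
    intro p
    by_cases hp : ∃ i, f i = p
    · obtain ⟨i, rfl⟩ := hp
      rw [hYdef, Yhat_ff]
      exact hXh.2.1 i
    · push_neg at hp
      rw [hYdef, Yhat_row_not f Xh p p hp, if_pos rfl]
  -- arithmetic facts
  have hrnXh := rank_nullity_mat Xh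
  have hrnY := rank_nullity_mat Y
  have hkerY : Module.finrank ℝ ↥(LinearMap.ker Y.mulVecLin)
      = Module.finrank ℝ ↥(LinearMap.ker Xh.mulVecLin) := finrank_ker_Yhat f Xh
  -- every feasible solution of P(G,c') has rank at most Y.rank
  have hbound : ∀ Z, Feasible G c' Z → Z.rank ≤ Y.rank := by
    intro Z hZ
    set X := Z.submatrix f f with hXdef
    have hXfeas : Feasible H c X := by
      refine ⟨hZ.1.submatrix f, fun i => hZ.2.1 (f i), ?_⟩
      intro i j hadj
      have h1 : Z (f i) (f j) = c' (f i) (f j) := hZ.2.2 _ _ ((hf i j).mp hadj)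
      have h2 : c' (f i) (f j) = Xh i j := by rw [hc', hYdef]; exact Yhat_ff f Xh i j
      rw [hXdef, Matrix.submatrix_apply, h1, h2]
      exact hXh.2.2 i j hadj
    have hXrank : X.rank ≤ maxRank H c := le_csSup hSbdd ⟨X, hXfeas, rfl⟩
    have hker : ∀ x ∈ LinearMap.ker X.mulVecLin, extV f x ∈ LinearMap.ker Z.mulVecLin := by
      intro x hx
      rw [LinearMap.mem_ker, Matrix.mulVecLin_apply] at hx ⊢
      have hq : (extV f x) ⬝ᵥ Z *ᵥ (extV f x) = 0 := by
        rw [ext_dot, ← hXdef, hx, dotProduct_zero]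
      have := (hZ.1.dotProduct_mulVec_zero_iff (extV f x)).mp (by rwa [star_trivial])
      exact this
    have hkle : Module.finrank ℝ ↥(LinearMap.ker X.mulVecLin)
        ≤ Module.finrank ℝ ↥(LinearMap.ker Z.mulVecLin) := by
      set g : ↥(LinearMap.ker X.mulVecLin) →ₗ[ℝ] ↥(LinearMap.ker Z.mulVecLin) :=
        LinearMap.codRestrict _ ((extV f).comp (LinearMap.ker X.mulVecLin).subtype)
          (fun x => hker x.1 x.2) with hg
      apply LinearMap.finrank_le_finrank_of_injective (f := g)
      intro a b hab
      exact Subtype.ext (extV_injective f (congrArg Subtype.val hab))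
    have hrnX := rank_nullity_mat X
    have hrnZ := rank_nullity_mat Z
    omega
  have hmaxG : maxRank G c' = Y.rank := by
    apply le_antisymm
    · refine csSup_le ⟨Y.rank, Y, hYfeas, rfl⟩ ?_
      rintro s ⟨Z, hZ, rfl⟩
      exact hbound Z hZ
    · exact le_csSup ⟨Y.rank, by rintro s ⟨Z, hZ, rfl⟩; exact hbound Z hZ⟩ ⟨Y, hYfeas, rfl⟩
  -- sd H c ≤ sd G c'
  have hsd : sd H c ≤ sd G c' := by
    apply sInf_le_sInf
    rintro s ⟨k, Ω, hΩ, rfl⟩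
    obtain ⟨h1, h2, h3, h4, h5⟩ := hΩ
    open scoped MatrixOrder in obtain ⟨B, hB⟩ := CStarAlgebra.nonneg_iff_eq_star_mul_self.mp hYfeas.1.nonneg
    rw [Matrix.star_eq_conjTranspose, Matrix.conjTranspose_eq_transpose_of_trivial] at hB
    have htr : ∀ j : Fin k, ((Ω j) * (Bᵀ * B)).trace = 0 := fun j => by
      rw [← hB]; exact h4 Y hYfeas j
    have hrows := gram_rows Ω h3 B htr
    have hbilin : ∀ (j : Fin k) (p q : Fin n), (B p) ⬝ᵥ (Ω j) *ᵥ (B q) = 0 := fun j p q =>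
      bilin_zero Ω h1 h3 j (B p) (B q) (fun i _ => hrows i p) (fun i _ => hrows i q)
    have hsand : ∀ j : Fin k, Y * Ω j * Y = 0 := fun j => by
      rw [hB]; exact sandwich (Ω j) B (hbilin j)
    have hout : ∀ (j : Fin k) (p q : Fin n), (∀ i, f i ≠ p) → (∀ i, f i ≠ q) → Ω j p q = 0 := by
      intro j p q hp hq
      have hrow : ∀ s, Y p s = if p = s then 1 else 0 := fun s => Yhat_row_not f Xh p s hp
      have hcol : ∀ t, Y t q = if t = q then 1 else 0 := by
        intro t
        by_cases ht : ∃ i, f i = t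
        · obtain ⟨i, rfl⟩ := ht
          rw [hYdef, Yhat_mixed f Xh i q hq, if_neg (fun h => hq i h)]
        · push_neg at ht
          exact Yhat_row_not f Xh t q ht
      have h0 : (Y * Ω j * Y) p q = 0 := by rw [hsand j]; rfl
      rwa [mul_delta_col (Y * Ω j) Y q hcol p, delta_row_mul Y (Ω j) p hrow q] at h0
    refine ⟨k, fun j => (Ω j).submatrix f f, ⟨?_, ?_, ?_, ?_, ?_⟩, rfl⟩
    case _ => -- symmetry
      intro j
      show ((Ω j).submatrix f f)ᵀ = (Ω j).submatrix f f
      rw [Matrix.transpose_submatrix, (h1 j).eq]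
    case _ => -- sparsity
      intro j i i' hne hadj
      show (Ω j).submatrix f f i i' = 0
      rw [Matrix.submatrix_apply]
      exact h2 j (f i) (f i') (fun h => hne (f.injective h))
        (fun hG => hadj ((hf i i').mpr hG))
    case _ => -- nested PSD
      intro j x hx
      show 0 ≤ x ⬝ᵥ (Ω j).submatrix f f *ᵥ x
      have := h3 j (extV f x) (fun i hi => by
        rw [ext_dot]
        exact hx i hi)
      rwa [ext_dot] at this
    case _ => -- trace
      intro X hX j
      show ((Ω j).submatrix f f * X).trace = 0
      have step2 : ((Ω j).submatrix f f * Xh).trace = ((Ω j) * Y).trace := by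
        simp only [Matrix.trace, Matrix.diag, Matrix.mul_apply, Matrix.submatrix_apply]
        rw [sum_range_emb f _ ?hz]
        case hz =>
          intro p hp
          apply Finset.sum_eq_zero
          intro q _
          by_cases hq : ∃ i, f i = q
          · obtain ⟨i, rfl⟩ := hq
            rw [hYdef, Yhat_mixed f Xh i p hp, mul_zero]
          · push_neg at hq
            rw [hout j p q hp hq, zero_mul]
        refine Finset.sum_congr rfl fun i _ => ?_
        rw [sum_range_emb f _ ?hz2]
        case hz2 =>
          intro q hq
          rw [hYdef, Yhat_row_not f Xh q (f i) hq, if_neg (fun h => hq i h.symm), mul_zero]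
        refine Finset.sum_congr rfl fun t _ => ?_
        rw [hYdef, Yhat_ff]
      have step1 : ((Ω j).submatrix f f * X).trace = ((Ω j).submatrix f f * Xh).trace := by
        simp only [Matrix.trace, Matrix.diag, Matrix.mul_apply, Matrix.submatrix_apply]
        refine Finset.sum_congr rfl fun i _ => Finset.sum_congr rfl fun t _ => ?_
        by_cases hti : t = i
        · subst hti
          rw [hX.2.1 t, hXh.2.1 t]
        · by_cases hadj : H.Adj i t
          · rw [hX.2.2 t i hadj.symm, hXh.2.2 t i hadj.symm]
          · rw [h2 j (f i) (f t) (fun h => hti (f.injective h).symm)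
              (fun hG => hadj ((hf i t).mpr hG)), zero_mul, zero_mul]
      rw [step1, step2]
      exact h4 Y hYfeas j
    case _ => -- dimension
      show Module.finrank ℝ
        ↥(Submodule.span ℝ {x : Fin m → ℝ | ∀ j : Fin k, x ⬝ᵥ ((Ω j).submatrix f f) *ᵥ x = 0})
        = maxRank H c
      set resL : (Fin n → ℝ) →ₗ[ℝ] (Fin m → ℝ) := LinearMap.funLeft ℝ ℝ f with hresL
      have hres_ext : ∀ x, resL (extV f x) = x := fun x => funext (extV_apply_f f x)
      set Zsub : Submodule ℝ (Fin n → ℝ) :=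
        { carrier := {y | ∀ j : Fin k, y ⬝ᵥ (Ω j) *ᵥ y = 0}
          add_mem' := by
            intro a b ha hb j
            have hab : a ⬝ᵥ (Ω j) *ᵥ b = 0 :=
              bilin_zero Ω h1 h3 j a b (fun i _ => ha i) (fun i _ => hb i)
            have hba : b ⬝ᵥ (Ω j) *ᵥ a = 0 := by rw [dot_symm _ (h1 j)]; exact hab
            simp only [Matrix.mulVec_add, dotProduct_add, add_dotProduct, ha j, hb j, hab, hba]
            ring
          zero_mem' := by intro j; simp
          smul_mem' := by
            intro a y hy j
            simp only [Matrix.mulVec_smul, dotProduct_smul, smul_dotProduct, smul_eq_mul]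
            rw [hy j]
            ring } with hZsub
      have hspanZ : Submodule.span ℝ {y : Fin n → ℝ | ∀ j : Fin k, y ⬝ᵥ (Ω j) *ᵥ y = 0}
          = Zsub := by
        rw [show {y : Fin n → ℝ | ∀ j : Fin k, y ⬝ᵥ (Ω j) *ᵥ y = 0} = (Zsub : Set _) from rfl,
          Submodule.span_eq]
      rw [hspanZ, hmaxG] at h5
      set Z' : Submodule ℝ (Fin m → ℝ) := Zsub.comap (extV f) with hZ'
      set O : Submodule ℝ (Fin n → ℝ) := LinearMap.ker resL with hO
      have hOZ : O ≤ Zsub := by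
        intro y hy
        have hyf : ∀ i, y (f i) = 0 := by
          intro i
          have := LinearMap.mem_ker.mp hy
          exact congrFun this i
        intro j
        apply Finset.sum_eq_zero
        intro p _
        by_cases hp : ∃ i, f i = p
        · obtain ⟨i, rfl⟩ := hp
          rw [hyf i, zero_mul]
        · push_neg at hp
          have hmv : ((Ω j) *ᵥ y) p = 0 := by
            show ∑ q, Ω j p q * y q = 0
            apply Finset.sum_eq_zero
            intro q _
            by_cases hq : ∃ i, f i = q
            · obtain ⟨i, rfl⟩ := hq
              rw [hyf i, mul_zero]
            · push_neg at hq
              rw [hout j p q hp hq, zero_mul]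
          rw [hmv, mul_zero]
      have hZOE : Zsub = O ⊔ Z'.map (extV f) := by
        apply le_antisymm
        · intro y hy
          have hw : y - extV f (resL y) ∈ O := by
            rw [LinearMap.mem_ker, map_sub, hres_ext, sub_self]
          have hyE : extV f (resL y) ∈ Z'.map (extV f) := by
            refine ⟨resL y, ?_, rfl⟩
            show extV f (resL y) ∈ Zsub
            have he : extV f (resL y) = y - (y - extV f (resL y)) := by abel
            rw [he]
            exact Zsub.sub_mem hy (hOZ hw)
          have hsum := Submodule.add_mem_sup hw hyE
          simpa using hsum
        · exact sup_le hOZ (Submodule.map_comap_le _ _)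
      have hOE : O ⊓ Z'.map (extV f) = ⊥ := by
        rw [eq_bot_iff]
        rintro y hy
        obtain ⟨hyO, x, _, rfl⟩ := Submodule.mem_inf.mp hy
        have hx0 : x = 0 := by
          rw [← hres_ext x]
          rw [LinearMap.mem_ker.mp hyO]
        rw [hx0, map_zero]
        simp
      have hdim := Submodule.finrank_sup_add_finrank_inf_eq O (Z'.map (extV f))
      rw [← hZOE, hOE, finrank_bot] at hdim
      have hE : Module.finrank ℝ ↥(Z'.map (extV f)) = Module.finrank ℝ ↥Z' :=
        ((Submodule.equivMapOfInjective _ (extV_injective f) Z').finrank_eq).symm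
      have hOdim : Module.finrank ℝ ↥O + m = n := by
        rw [hO]
        have h := LinearMap.finrank_range_add_finrank_ker resL
        rw [LinearMap.range_eq_top.mpr (fun x => ⟨extV f x, hres_ext x⟩), finrank_top,
          Module.finrank_pi, Module.finrank_pi, Fintype.card_fin, Fintype.card_fin] at h
        omega
      have hsetZ' : {x : Fin m → ℝ | ∀ j : Fin k, x ⬝ᵥ ((Ω j).submatrix f f) *ᵥ x = 0}
          = (Z' : Set _) := by
        ext x
        simp only [Set.mem_setOf_eq, SetLike.mem_coe, Submodule.mem_comap]
        constructor
        · intro hx j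
          show (extV f x) ⬝ᵥ (Ω j) *ᵥ (extV f x) = 0
          rw [ext_dot]
          exact hx j
        · intro hx j
          have := hx j
          rwa [ext_dot] at this
      rw [hsetZ', Submodule.span_eq]
      omega

  exact hsd.trans (le_sSup ⟨c', ⟨Y, hYfeas⟩, rfl⟩)
end

section
/- For the cycle C_n with n ≥ 4, the singularity degree satisfies sd(C_n) ≥ 2. Concretely: there is a placement p : V(C_n) → S¹ with p(v₁) = p(v₂) and all other points on the circular arc between p(v₁) and p(vₙ), such that P(C_n, π(Gram(p))) is uniquely solvable with a rank-2 solution, but any single equilibrium PSD stress ω of (C_n, p) vanishes on all edges of the path v₂v₃⋯vₙ. -/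
open Matrix

private lemma arccos_anti : Antitone Real.arccos := fun x y h => by
  simp only [Real.arccos]
  linarith [Real.monotone_arcsin h]

private lemma sph_triangle {E : Type*} [NormedAddCommGroup E] [InnerProductSpace ℝ E]
    {u v w : E} (hu : ‖u‖ = 1) (hv : ‖v‖ = 1) (hw : ‖w‖ = 1) :
    Real.arccos (inner ℝ u w) ≤ Real.arccos (inner ℝ u v) + Real.arccos (inner ℝ v w) := by
  set a : ℝ := inner ℝ u v with ha
  set b : ℝ := inner ℝ v w with hb
  set c : ℝ := inner ℝ u w with hc
  have ha1 : |a| ≤ 1 := by simpa [hu, hv] using abs_real_inner_le_norm u v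
  have hb1 : |b| ≤ 1 := by simpa [hv, hw] using abs_real_inner_le_norm v w
  rw [abs_le] at ha1 hb1
  rcases le_or_gt Real.pi (Real.arccos a + Real.arccos b) with hπ | hπ
  · exact (Real.arccos_le_pi c).trans hπ
  · have h1 : ‖u - a • v‖ = Real.sqrt (1 - a^2) := by
      have e : (1 : ℝ) - a^2 = ‖u - a • v‖^2 := by
        rw [norm_sub_sq_real, real_inner_smul_right, norm_smul, hu, hv, ← ha]
        simp [abs_sq]
        ring
      rw [e, Real.sqrt_sq (norm_nonneg _)]
    have h2 : ‖w - b • v‖ = Real.sqrt (1 - b^2) := by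
      have e : (1 : ℝ) - b^2 = ‖w - b • v‖^2 := by
        rw [norm_sub_sq_real, real_inner_smul_right, norm_smul, hw, hv, real_inner_comm, ← hb]
        simp [abs_sq]
        ring
      rw [e, Real.sqrt_sq (norm_nonneg _)]
    have h3 : inner ℝ (u - a • v) (w - b • v) = c - a * b := by
      rw [inner_sub_left, inner_sub_right, inner_sub_right, real_inner_smul_left,
        real_inner_smul_left, real_inner_smul_right, real_inner_smul_right,
        real_inner_self_eq_norm_sq, hv]
      ring
    have h4 : a * b - c ≤ Real.sqrt (1 - a^2) * Real.sqrt (1 - b^2) := by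
      have := abs_real_inner_le_norm (u - a • v) (w - b • v)
      rw [h3, h1, h2] at this
      have := neg_abs_le (c - a * b)
      nlinarith [abs_real_inner_le_norm (u - a • v) (w - b • v), h3, h1, h2]
    have hcos : Real.cos (Real.arccos a + Real.arccos b) ≤ c := by
      rw [Real.cos_add, Real.cos_arccos ha1.1 ha1.2, Real.cos_arccos hb1.1 hb1.2,
        Real.sin_arccos, Real.sin_arccos]
      linarith
    calc Real.arccos c ≤ Real.arccos (Real.cos (Real.arccos a + Real.arccos b)) :=
          arccos_anti hcos
      _ = Real.arccos a + Real.arccos b :=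
          Real.arccos_cos (add_nonneg (Real.arccos_nonneg _) (Real.arccos_nonneg _)) hπ.le

private lemma mod_helper {n a b : ℕ} (hn : 2 ≤ n) (ha : a < n) (hb : b < n)
    (h : (n - b + a) % n = 1) : a = b + 1 ∨ (a = 0 ∧ b = n - 1) := by
  rcases le_or_gt b a with h1 | h1
  · have e : n - b + a = n + (a - b) := by omega
    rw [e, Nat.add_mod_left, Nat.mod_eq_of_lt (by omega)] at h
    omega
  · rw [Nat.mod_eq_of_lt (by omega)] at h
    omega

private lemma cycle_adj_vals {n : ℕ} (hn : 2 ≤ n) {u v : Fin n}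
    (h : (SimpleGraph.cycleGraph n).Adj u v) :
    (u.val = v.val + 1) ∨ (v.val = u.val + 1) ∨ (u.val = 0 ∧ v.val = n - 1) ∨
      (v.val = 0 ∧ u.val = n - 1) := by
  rw [SimpleGraph.cycleGraph_adj'] at h
  rcases h with h | h
  · simp only [Fin.sub_def] at h
    rcases mod_helper hn u.isLt v.isLt h with h | h
    · exact Or.inl h
    · exact Or.inr (Or.inr (Or.inl h))
  · simp only [Fin.sub_def] at h
    rcases mod_helper hn v.isLt u.isLt h with h | h
    · exact Or.inr (Or.inl h)
    · exact Or.inr (Or.inr (Or.inr h))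

private lemma cycle_adj_succ {n : ℕ} {k : ℕ} (hk : k + 1 < n) :
    (SimpleGraph.cycleGraph n).Adj ⟨k, by omega⟩ ⟨k + 1, hk⟩ := by
  rw [SimpleGraph.cycleGraph_adj']
  right
  simp only [Fin.sub_def]
  have e : n - k + (k + 1) = n + 1 := by omega
  rw [e, Nat.add_mod_left, Nat.mod_eq_of_lt (by omega)]

private lemma cycle_adj_last {n : ℕ} (hn : 2 ≤ n) :
    (SimpleGraph.cycleGraph n).Adj ⟨0, by omega⟩ ⟨n - 1, by omega⟩ := by
  rw [SimpleGraph.cycleGraph_adj']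
  left
  simp only [Fin.sub_def]
  have e : n - (n - 1) + 0 = 1 := by omega
  rw [e, Nat.mod_eq_of_lt (by omega)]

theorem cycle_singularity_degree_ge_two {n : ℕ} (hn : 4 ≤ n)
    (C : SimpleGraph (Fin n)) (hC : C = SimpleGraph.cycleGraph n) :
    ∃ (p : Fin n → (Fin 2 → ℝ)) (θ : Fin n → ℝ),
      -- the points lie on the unit circle `S¹`,
      (∀ i, p i = fun a => if a = 0 then Real.cos (θ i) else Real.sin (θ i)) ∧
      -- `p(v₁) = p(v₂)`,
      θ ⟨0, by omega⟩ = θ ⟨1, by omega⟩ ∧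
      -- and all the other points lie, in order, on the (minor) circular arc
      -- between `p(v₁)` and `p(vₙ)`:
      (∀ i j : Fin n, 1 ≤ (i : ℕ) → i < j → θ i < θ j) ∧
      θ ⟨n - 1, by omega⟩ - θ ⟨1, by omega⟩ < Real.pi ∧
      -- the completion problem `P(Cₙ, π(Gram p))` is uniquely solvable,
      (∀ X : Matrix (Fin n) (Fin n) ℝ, X.PosSemidef → (∀ i, X i i = 1) →
        (∀ i j, C.Adj i j → X i j = p i ⬝ᵥ p j) →
        X = Matrix.of fun i j => p i ⬝ᵥ p j) ∧
      -- with a rank-2 solution,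
      (Matrix.of fun i j => p i ⬝ᵥ p j : Matrix (Fin n) (Fin n) ℝ).rank = 2 ∧
      -- but every equilibrium PSD stress of `(Cₙ, p)` vanishes on all the edges of
      -- the path `v₂v₃⋯vₙ` (the edges of the cycle avoiding the vertex `v₁`).
      (∀ Ω : Matrix (Fin n) (Fin n) ℝ, Ω.IsSymm →
        (∀ i j, i ≠ j → ¬ C.Adj i j → Ω i j = 0) →
        Ω.PosSemidef →
        (∀ i a, ∑ j, Ω i j * p j a = 0) →
        ∀ i j : Fin n, C.Adj i j → i ≠ ⟨0, by omega⟩ → j ≠ ⟨0, by omega⟩ → Ω i j = 0) := by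
  subst hC
  have hnR : (0 : ℝ) < n := by exact_mod_cast (by omega : 0 < n)
  set δ : ℝ := 1 / n with hδdef
  have hδ : 0 < δ := by positivity
  set θ : Fin n → ℝ := fun i => ((i.val - 1 : ℕ) : ℝ) * δ with hθ
  set p : Fin n → Fin 2 → ℝ := fun i a =>
    if a = 0 then Real.cos (θ i) else Real.sin (θ i) with hp
  -- basic facts about θ
  have hθub : ∀ (b : ℕ) (hb : b < n), θ ⟨b, hb⟩ ≤ ((n - 2 : ℕ) : ℝ) * δ := by
    intro b hb
    simp only [hθ, Fin.val_mk]
    have : ((b - 1 : ℕ) : ℝ) ≤ ((n - 2 : ℕ) : ℝ) := by exact_mod_cast (by omega : b - 1 ≤ n - 2)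
    nlinarith
  have hθ0 : ∀ (b : ℕ) (hb : b < n), 0 ≤ θ ⟨b, hb⟩ := by
    intro b hb
    simp only [hθ, Fin.val_mk]
    positivity
  have hθpi : ((n - 2 : ℕ) : ℝ) * δ < Real.pi := by
    have h1 : ((n - 2 : ℕ) : ℝ) ≤ (n : ℝ) := by exact_mod_cast (by omega : n - 2 ≤ n)
    have h2 : ((n - 2 : ℕ) : ℝ) * δ ≤ 1 := by
      rw [hδdef]
      rw [mul_one_div, div_le_one hnR]
      exact h1
    linarith [Real.pi_gt_three]
  have hθmono : ∀ (a b : ℕ) (ha : a < n) (hb : b < n), a ≤ b → θ ⟨a, ha⟩ ≤ θ ⟨b, hb⟩ := by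
    intro a b ha hb hab
    simp only [hθ, Fin.val_mk]
    have : ((a - 1 : ℕ) : ℝ) ≤ ((b - 1 : ℕ) : ℝ) := by exact_mod_cast (by omega : a - 1 ≤ b - 1)
    nlinarith
  have hθgap : ∀ (m : ℕ) (h : m + 1 < n), 1 ≤ m → θ ⟨m + 1, h⟩ - θ ⟨m, by omega⟩ = δ := by
    intro m h hm
    simp only [hθ, Fin.val_mk]
    have e : (m + 1 - 1 : ℕ) = (m - 1) + 1 := by omega
    rw [e]
    push_cast
    ring
  have hθ1 : θ ⟨1, by omega⟩ = 0 := by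
    simp only [hθ, Fin.val_mk]
    norm_num
  have hθz : θ ⟨0, by omega⟩ = 0 := by
    simp only [hθ, Fin.val_mk]
    norm_num
  have hθlast : θ ⟨n - 1, by omega⟩ = ((n - 2 : ℕ) : ℝ) * δ := by
    have e : (n - 1 - 1 : ℕ) = n - 2 := by omega
    simp only [hθ, Fin.val_mk, e]
  have hδpi : δ < Real.pi := by
    have := hθpi
    have h2 : δ ≤ ((n - 2 : ℕ) : ℝ) * δ := by
      have : (1 : ℝ) ≤ ((n - 2 : ℕ) : ℝ) := by exact_mod_cast (by omega : 1 ≤ n - 2)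
      nlinarith
    linarith
  have hsinδ : 0 < Real.sin δ := Real.sin_pos_of_pos_of_lt_pi hδ hδpi
  -- dot products
  have hdotp : ∀ i j : Fin n, p i ⬝ᵥ p j = Real.cos (θ i - θ j) := by
    intro i j
    rw [dotProduct, Fin.sum_univ_two, Real.cos_sub]
    simp [hp]
  refine ⟨p, θ, fun i => rfl, ?_, ?_, ?_, ?_, ?_, ?_⟩
  · -- θ 0 = θ 1
    simp only [hθ, Fin.val_mk]
  · -- strict monotonicity
    intro i j h1 hij
    simp only [hθ, Fin.val_mk]
    have hlt : (i.val - 1 : ℕ) < (j.val - 1 : ℕ) := by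
      have := (Fin.lt_def).mp hij
      omega
    have : ((i.val - 1 : ℕ) : ℝ) < ((j.val - 1 : ℕ) : ℝ) := by exact_mod_cast hlt
    nlinarith
  · -- arc less than pi
    rw [hθ1, hθlast]
    simpa using hθpi
  · -- uniqueness of the completion
    intro X hpsd hdiag hedge
    obtain ⟨B, hB⟩ : ∃ B : Matrix (Fin n) (Fin n) ℝ, X = Bᴴ * B := by
      open scoped MatrixOrder in exact CStarAlgebra.nonneg_iff_eq_star_mul_self.mp hpsd.nonneg
    set u : Fin n → EuclideanSpace ℝ (Fin n) := fun i => WithLp.toLp 2 (fun k => B k i) with hu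
    have hinner : ∀ i j, inner ℝ (u i) (u j) = X i j := by
      intro i j
      rw [hB]
      simp [PiLp.inner_apply, RCLike.inner_apply, Matrix.mul_apply,
        Matrix.conjTranspose_apply, hu]
      exact Finset.sum_congr rfl fun _ _ => mul_comm _ _
    have hnorm : ∀ i, ‖u i‖ = 1 := by
      intro i
      have h2 : ‖u i‖ ^ 2 = 1 := by rw [← real_inner_self_eq_norm_sq, hinner, hdiag]
      nlinarith [norm_nonneg (u i)]
    have hbound : ∀ i j, -1 ≤ X i j ∧ X i j ≤ 1 := by
      intro i j
      have := abs_real_inner_le_norm (u i) (u j)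
      rw [hinner, hnorm, hnorm] at this
      constructor <;> [linarith [neg_abs_le (X i j)]; linarith [le_abs_self (X i j)]]
    have htri : ∀ a b c : Fin n,
        Real.arccos (X a c) ≤ Real.arccos (X a b) + Real.arccos (X b c) := by
      intro a b c
      rw [← hinner, ← hinner, ← hinner]
      exact sph_triangle (hnorm _) (hnorm _) (hnorm _)
    have harc_edge : ∀ (k : ℕ) (hk : k + 1 < n),
        Real.arccos (X ⟨k, by omega⟩ ⟨k + 1, hk⟩) = θ ⟨k + 1, hk⟩ - θ ⟨k, by omega⟩ := by
      intro k hk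
      rw [hedge _ _ (cycle_adj_succ hk), hdotp, ← Real.cos_neg, neg_sub]
      exact Real.arccos_cos
        (by linarith [hθmono k (k + 1) (by omega) hk (by omega)])
        (by
          have h1 := hθub (k + 1) hk
          have h2 := hθ0 k (by omega : k < n)
          linarith)
    have hup : ∀ (b : ℕ) (hb : b < n) (a : ℕ) (hab : a ≤ b),
        Real.arccos (X ⟨a, by omega⟩ ⟨b, hb⟩) ≤ θ ⟨b, hb⟩ - θ ⟨a, by omega⟩ := by
      intro b
      induction b with
      | zero =>
        intro hb a hab
        have ha0 : a = 0 := by omega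
        subst ha0
        simp [hdiag, Real.arccos_one]
      | succ b ih =>
        intro hb a hab
        rcases Nat.lt_or_ge a (b + 1) with h | h
        · have h1 := ih (by omega) a (by omega)
          have h2 := htri ⟨a, by omega⟩ ⟨b, by omega⟩ ⟨b + 1, hb⟩
          have h3 := harc_edge b hb
          linarith
        · have ha : a = b + 1 := by omega
          subst ha
          simp [hdiag, Real.arccos_one]
    have harc_last : Real.arccos (X ⟨0, by omega⟩ ⟨n - 1, by omega⟩)
        = θ ⟨n - 1, by omega⟩ - θ ⟨0, by omega⟩ := by
      rw [hedge _ _ (cycle_adj_last (by omega)), hdotp, ← Real.cos_neg, neg_sub]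
      exact Real.arccos_cos
        (by linarith [hθmono 0 (n - 1) (by omega) (by omega) (by omega)])
        (by
          have h1 := hθub (n - 1) (by omega)
          have h2 := hθ0 0 (by omega : 0 < n)
          linarith)
    have hlow : ∀ (a b : ℕ) (hab : a ≤ b) (hb : b < n),
        θ ⟨b, hb⟩ - θ ⟨a, by omega⟩ ≤ Real.arccos (X ⟨a, by omega⟩ ⟨b, hb⟩) := by
      intro a b hab hb
      have t1 := htri ⟨0, by omega⟩ ⟨a, by omega⟩ ⟨n - 1, by omega⟩
      have t2 := htri ⟨a, by omega⟩ ⟨b, hb⟩ ⟨n - 1, by omega⟩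
      have t3 := hup a (by omega) 0 (by omega)
      have t4 := hup (n - 1) (by omega) b (by omega)
      linarith [harc_last]
    have main : ∀ i j : Fin n, i.val ≤ j.val → X i j = Real.cos (θ j - θ i) := by
      intro i j hij
      have e1 : Real.arccos (X ⟨i.val, i.isLt⟩ ⟨j.val, j.isLt⟩)
          = θ ⟨j.val, j.isLt⟩ - θ ⟨i.val, i.isLt⟩ :=
        le_antisymm (hup j.val j.isLt i.val hij) (hlow i.val j.val hij j.isLt)
      have e2 : X i j = Real.cos (Real.arccos (X i j)) :=
        (Real.cos_arccos (hbound i j).1 (hbound i j).2).symm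
      rw [e2]
      rw [show X i j = X ⟨i.val, i.isLt⟩ ⟨j.val, j.isLt⟩ from rfl, e1]
    ext i j
    rw [Matrix.of_apply, hdotp]
    rcases le_total i.val j.val with h | h
    · rw [main i j h, ← Real.cos_neg, neg_sub]
    · have hsymX : X i j = X j i := by
        have := hpsd.isHermitian
        rw [Matrix.IsHermitian] at this
        conv_lhs => rw [← this]
        simp [Matrix.conjTranspose_apply]
      rw [hsymX, main j i h]
  · -- rank 2
    have hv1 : (1 : ℕ) < n := by omega
    have hv2 : n - 1 < n := by omega
    set Bm : Matrix (Fin n) (Fin 2) ℝ := Matrix.of fun i a => p i a with hBm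
    have hfac : (Matrix.of fun i j => p i ⬝ᵥ p j : Matrix (Fin n) (Fin n) ℝ) = Bm * Bmᵀ := by
      ext i j
      simp [Matrix.mul_apply, dotProduct, hBm]
    rw [hfac, Matrix.rank_self_mul_transpose]
    refine le_antisymm (by simpa using Matrix.rank_le_card_width Bm) ?_
    set S : Matrix (Fin 2) (Fin n) ℝ := Matrix.of fun a i =>
      if i = (if a = 0 then (⟨1, hv1⟩ : Fin n) else ⟨n - 1, hv2⟩) then 1 else 0 with hS
    have hSB : S * Bm = !![Real.cos (θ ⟨1, hv1⟩), Real.sin (θ ⟨1, hv1⟩);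
        Real.cos (θ ⟨n - 1, hv2⟩), Real.sin (θ ⟨n - 1, hv2⟩)] := by
      ext a c
      rw [Matrix.mul_apply]
      fin_cases a <;> fin_cases c <;>
        simp [hS, hBm, hp, ite_mul]
    have hpos : 0 < Real.sin (((n - 2 : ℕ) : ℝ) * δ) := by
      apply Real.sin_pos_of_pos_of_lt_pi _ hθpi
      have : (0 : ℝ) < ((n - 2 : ℕ) : ℝ) := by exact_mod_cast (by omega : 0 < n - 2)
      positivity
    have hdet : (S * Bm).det ≠ 0 := by
      rw [hSB, Matrix.det_fin_two_of, hθ1, hθlast]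
      simp only [Real.cos_zero, Real.sin_zero]
      intro hcon
      nlinarith
    have h2 : (S * Bm).rank = 2 := by
      rw [Matrix.rank_of_isUnit _ ((Matrix.isUnit_iff_isUnit_det _).mpr
        (isUnit_iff_ne_zero.mpr hdet))]
      simp
    calc (2 : ℕ) = (S * Bm).rank := h2.symm
      _ ≤ Bm.rank := Matrix.rank_mul_le_right S Bm
  · -- stress part
    intro Ω hsym hsupp _hpsd heq i j hadj hi hj
    have hrot : ∀ m : Fin n, ∑ k, Ω m k * Real.sin (θ k - θ m) = 0 := by
      intro m
      have e0 : ∑ k, Ω m k * Real.cos (θ k) = 0 := by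
        have := heq m 0
        simpa [hp] using this
      have e1 : ∑ k, Ω m k * Real.sin (θ k) = 0 := by
        have := heq m 1
        simpa [hp] using this
      have e2 : ∑ k, Ω m k * Real.sin (θ k - θ m)
          = Real.cos (θ m) * ∑ k, Ω m k * Real.sin (θ k)
            - Real.sin (θ m) * ∑ k, Ω m k * Real.cos (θ k) := by
        rw [Finset.mul_sum, Finset.mul_sum, ← Finset.sum_sub_distrib]
        refine Finset.sum_congr rfl fun k _ => ?_
        rw [Real.sin_sub]
        ring
      rw [e2, e0, e1]
      ring
    have vertexEq : ∀ (m : ℕ) (hm1 : 1 ≤ m) (hm2 : m ≤ n - 2),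
        Ω ⟨m, by omega⟩ ⟨m - 1, by omega⟩ * Real.sin (θ ⟨m - 1, by omega⟩ - θ ⟨m, by omega⟩)
          + Ω ⟨m, by omega⟩ ⟨m + 1, by omega⟩ * Real.sin (θ ⟨m + 1, by omega⟩ - θ ⟨m, by omega⟩)
        = 0 := by
      intro m hm1 hm2
      have hrm := hrot ⟨m, by omega⟩
      rw [Fintype.sum_eq_add (⟨m - 1, by omega⟩ : Fin n) (⟨m + 1, by omega⟩ : Fin n)
        (by simp only [ne_eq, Fin.mk.injEq]; omega) ?_] at hrm
      · exact hrm
      · intro c hc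
        obtain ⟨hc1, hc2⟩ := hc
        by_cases hcm : c = ⟨m, by omega⟩
        · rw [hcm]
          simp
        · have hnadj : ¬ (SimpleGraph.cycleGraph n).Adj ⟨m, by omega⟩ c := by
            intro hadj'
            rcases cycle_adj_vals (by omega) hadj' with h | h | h | h
            · exact hc1 (Fin.ext (by simp only [Fin.val_mk] at h ⊢; omega))
            · exact hc2 (Fin.ext (by simp only [Fin.val_mk] at h ⊢; omega))
            · simp only [Fin.val_mk] at h; omega
            · simp only [Fin.val_mk] at h
              omega
          rw [hsupp _ _ (fun h => hcm h.symm) hnadj, zero_mul]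
    have key : ∀ (k : ℕ) (hk0 : 1 ≤ k) (hk1 : k + 1 ≤ n - 1), Ω ⟨k, by omega⟩ ⟨k + 1, by omega⟩ = 0 := by
      intro k
      induction k with
      | zero => intro h _; exact absurd h (by omega)
      | succ k ih =>
        intro _ hk1
        rcases Nat.eq_zero_or_pos k with hk0 | hk0
        · subst hk0
          have hv := vertexEq 1 le_rfl (by omega)
          have e0 : θ (⟨1 - 1, by omega⟩ : Fin n) - θ ⟨1, by omega⟩ = 0 := by
            rw [hθz, hθ1]
            ring
          rw [e0, Real.sin_zero, mul_zero, zero_add] at hv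
          have hg : θ (⟨1 + 1, by omega⟩ : Fin n) - θ ⟨1, by omega⟩ = δ :=
            hθgap 1 (by omega) le_rfl
          rw [hg] at hv
          exact (mul_eq_zero.mp hv).resolve_right hsinδ.ne'
        · have hv := vertexEq (k + 1) (by omega) (by omega)
          have h1 : Ω ⟨k + 1, by omega⟩ ⟨k + 1 - 1, by omega⟩ = 0 := by
            have e : Ω (⟨k + 1 - 1, by omega⟩ : Fin n) ⟨k + 1, by omega⟩ = 0 := by
              have := ih (by omega) (by omega)
              convert this using 2 <;> simp
            rw [← hsym.apply] at e
            exact e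
          rw [h1, zero_mul, zero_add] at hv
          have hg : θ (⟨k + 1 + 1, by omega⟩ : Fin n) - θ ⟨k + 1, by omega⟩ = δ :=
            hθgap (k + 1) (by omega) (by omega)
          rw [hg] at hv
          exact (mul_eq_zero.mp hv).resolve_right hsinδ.ne'
    have hi0 : i.val ≠ 0 := fun h => hi (Fin.ext h)
    have hj0 : j.val ≠ 0 := fun h => hj (Fin.ext h)
    rcases cycle_adj_vals (by omega) hadj with h | h | h | h
    · -- i = j + 1
      have e : Ω i j = Ω (⟨j.val + 1, by omega⟩ : Fin n) ⟨j.val, j.isLt⟩ := by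
        congr 1
        exact Fin.ext h
      rw [e, hsym.apply]
      exact key j.val (by omega) (by omega)
    · -- j = i + 1
      have e : Ω i j = Ω (⟨i.val, i.isLt⟩ : Fin n) ⟨i.val + 1, by omega⟩ := by
        congr 1
        exact Fin.ext h
      rw [e]
      exact key i.val (by omega) (by omega)
    · exact absurd h.1 hi0
    · exact absurd h.1 hj0
end
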